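/- Consider N agents in ℝ³ with single-integrator dynamics, where agent i's local frame orientation is given by a fixed special orthogonal matrix C_i ∈ SO(3). Let G be a weighted directed graph on {1,…,N} with positive weights l_{ij} > 0 on its edges and suppose G has a rooted-out branch. Let p_1*,…,p_N* ∈ ℝ³ be desired positions, k_u > 0, and suppose Ĉ_i : [0,∞) → ℝ^{3×3} are orientation estimates for which there exists a matrix C* ∈ ℝ^{3×3} and constants k_w, λ_w > 0 such that ‖C_i^T Ĉ_i(t) − C*‖ ≤ k_w e^{−λ_w t} for all i and all t ≥ 0. If p_1,…,p_N : [0,∞) → ℝ³ are differentiable and satisfy the formation control law ṗ_i(t) = k_u Σ_{j : l_{ij} > 0} l_{ij} ( (p_j(t) − p_i(t)) − C_i^T Ĉ_i(t) (p_j* − p_i*) ), then there exist a point p_∞ ∈ ℝ³ and constants c > 0, λ > 0 such that ‖p_i(t) − (C* p_i* + p_∞)‖ ≤ c e^{−λ t} for all i and all t ≥ 0; in particular p_j(t) − p_i(t) → C*(p_j* − p_i*) as t → ∞ for all i, j. -/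

import Mathlib

open Matrix Filter

/-- `G` has a rooted-out branch: some vertex has a directed path to every other vertex
(information flows from `j` to `i` along an edge when `l i j > 0`). -/
def hasRootedOutBranch {N : ℕ} (l : Fin N → Fin N → ℝ) : Prop :=
  ∃ r : Fin N, ∀ v : Fin N, Relation.ReflTransGen (fun u v => 0 < l v u) r v

/-- The Euclidean norm on `ℝ^m`. -/
noncomputable def enorm {m : Type*} [Fintype m] (v : m → ℝ) : ℝ :=
  Real.sqrt (∑ i, v i ^ 2)

/-- The (Frobenius) norm of a real matrix. -/
noncomputable def mnorm {m n : Type*} [Fintype m] [Fintype n]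
    (A : Matrix m n ℝ) : ℝ :=
  Real.sqrt (∑ i, ∑ j, A i j ^ 2)

/-!
Write `x = p - C* p*` coordinatewise. Each spatial coordinate of `x` follows the Laplacian flow
`x' = -L x` of the graph with weights `ku l`, perturbed by an input of size `O(e^{-λ_w t})` coming
from the orientation errors `C_iᵀ Ĉ_i(t) - C*`. The matrices `exp (-t L)` are row-stochastic, and
because a root reaches every vertex, the root's column of `exp (-L)` is positive. By variation of
constants, over each unit time step the oscillation `max_i x_i - min_i x_i` therefore contracts by
a factor `1 - δ < 1` up to the decaying perturbation, while all later values stay within the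
current range widened by that perturbation. So the oscillation decays exponentially and the `x_i`
converge exponentially to one common limit, which is `p_∞`.
-/

open Finset Real
open scoped Matrix.Norms.Operator Topology

namespace Matrix

theorem _root_.HasDerivAt.matrix_mulVec {m n : Type*} [Fintype m] [Fintype n]
    {A : ℝ → Matrix m n ℝ} {A' : Matrix m n ℝ} {v : ℝ → n → ℝ} {v' : n → ℝ} {t : ℝ}
    (hA : HasDerivAt A A' t) (hv : HasDerivAt v v' t) :
    HasDerivAt (fun s => A s *ᵥ v s) (A t *ᵥ v' + A' *ᵥ v t) t :=
  (mulVecBilin ℝ ℝ : Matrix m n ℝ →ₗ[ℝ] _).toContinuousBilinearMap.hasDerivAt_of_bilinear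
    (fun _ => hA) fun _ => hv

variable {n : Type*} [Fintype n] [DecidableEq n]

theorem hasSum_exp_apply (A : Matrix n n ℝ) (i j : n) :
    HasSum (fun k : ℕ => (k.factorial : ℝ)⁻¹ * (A ^ k) i j) (NormedSpace.exp A i j) :=
  (NormedSpace.exp_series_hasSum_exp' (𝕂 := ℝ) A).mapL
    (entryLinearMap ℝ ℝ i j).toContinuousLinearMap

theorem exp_apply_nonneg {A : Matrix n n ℝ} (hA : ∀ i j, 0 ≤ A i j) (i j : n) :
    0 ≤ NormedSpace.exp A i j :=
  (hasSum_exp_apply A i j).nonneg fun k => by have := pow_apply_nonneg hA k i j; positivity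

theorem pow_apply_div_factorial_le_exp_apply {A : Matrix n n ℝ} (hA : ∀ i j, 0 ≤ A i j)
    (k : ℕ) (i j : n) : (k.factorial : ℝ)⁻¹ * (A ^ k) i j ≤ NormedSpace.exp A i j :=
  le_hasSum (hasSum_exp_apply A i j) k fun m _ => by
    have := pow_apply_nonneg hA m i j; positivity

theorem exists_pow_apply_pos {A : Matrix n n ℝ} (hA : ∀ i j, 0 ≤ A i j) {r i : n}
    (h : Relation.ReflTransGen (fun u v => 0 < A v u) r i) : ∃ k, 0 < (A ^ k) i r := by
  induction h with
  | refl => exact ⟨0, by simp⟩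
  | @tail u v _ huv ih =>
    obtain ⟨k, hk⟩ := ih
    refine ⟨k + 1, ?_⟩
    rw [pow_succ', mul_apply]
    exact lt_of_lt_of_le (mul_pos huv hk) <| single_le_sum (f := fun w => A v w * (A ^ k) w r)
      (fun w _ => mul_nonneg (hA v w) (pow_apply_nonneg hA k w r)) (mem_univ u)

theorem exp_add_smul_one (A : Matrix n n ℝ) (c : ℝ) :
    NormedSpace.exp (A + c • 1) = Real.exp c • NormedSpace.exp A := by
  have h := NormedSpace.algebraMap_exp_comm (𝔸 := Matrix n n ℝ) c
  rw [Algebra.algebraMap_eq_smul_one, Algebra.algebraMap_eq_smul_one, ← Real.exp_eq_exp_ℝ] at h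
  rw [exp_add_of_commute _ _ ((Commute.one_right A).smul_right c),
    show NormedSpace.exp (c • (1 : Matrix n n ℝ)) = Real.exp c • 1 from h.symm, mul_smul_comm,
    mul_one]

theorem exp_mulVec_of_mulVec_eq_zero {A : Matrix n n ℝ} {v : n → ℝ} (hv : A *ᵥ v = 0) :
    NormedSpace.exp A *ᵥ v = v := by
  have hsum := (NormedSpace.exp_series_hasSum_exp' (𝕂 := ℝ) A).mapL
    ((mulVecBilin ℝ ℝ : Matrix n n ℝ →ₗ[ℝ] _).toContinuousBilinearMap.flip v)
  have hterm : ∀ k ≠ 0, ((k.factorial : ℝ)⁻¹ • A ^ k) *ᵥ v = 0 := by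
    rintro (_ | k) hk
    · exact absurd rfl hk
    · rw [smul_mulVec, pow_succ, ← mulVec_mulVec, hv, mulVec_zero, smul_zero]
  exact (hsum.unique (hasSum_single 0 hterm)).trans (by simp)

variable {M : Matrix n n ℝ}

theorem norm_mulVec_le_of_mem_rowStochastic (hM : M ∈ rowStochastic ℝ n) (v : n → ℝ) :
    ‖M *ᵥ v‖ ≤ ‖v‖ := by
  refine (pi_norm_le_iff_of_nonneg (norm_nonneg v)).2 fun i => ?_
  calc ‖(M *ᵥ v) i‖ ≤ ∑ j, ‖M i j * v j‖ := norm_sum_le _ _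
    _ ≤ ∑ j, M i j * ‖v‖ := sum_le_sum fun j _ => by
        rw [norm_mul, Real.norm_of_nonneg (hM.1 i j)]
        exact mul_le_mul_of_nonneg_left (norm_le_pi_norm v j) (hM.1 i j)
    _ = ‖v‖ := by rw [← sum_mul, sum_row_of_mem_rowStochastic hM, one_mul]

theorem mulVec_apply_le_of_mem_rowStochastic (hM : M ∈ rowStochastic ℝ n) (v : n → ℝ)
    (i r : n) : (M *ᵥ v) i ≤ (⨆ j, v j) - M i r * ((⨆ j, v j) - v r) := by
  have hgap : ∑ j, M i j * ((⨆ j, v j) - v j) = (⨆ j, v j) - (M *ᵥ v) i := by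
    simp only [mul_sub, sum_sub_distrib, ← sum_mul, sum_row_of_mem_rowStochastic hM, one_mul,
      mulVec, dotProduct]
  have hr := single_le_sum (f := fun j => M i j * ((⨆ j, v j) - v j))
    (fun j _ => mul_nonneg (hM.1 i j) (sub_nonneg.2 (le_ciSup (Finite.bddAbove_range v) j)))
    (mem_univ r)
  linarith

theorem le_mulVec_apply_of_mem_rowStochastic (hM : M ∈ rowStochastic ℝ n) (v : n → ℝ)
    (i r : n) : (⨅ j, v j) + M i r * (v r - ⨅ j, v j) ≤ (M *ᵥ v) i := by
  have hgap : ∑ j, M i j * (v j - ⨅ j, v j) = (M *ᵥ v) i - ⨅ j, v j := by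
    simp only [mul_sub, sum_sub_distrib, ← sum_mul, sum_row_of_mem_rowStochastic hM, one_mul,
      mulVec, dotProduct]
  have hr := single_le_sum (f := fun j => M i j * (v j - ⨅ j, v j))
    (fun j _ => mul_nonneg (hM.1 i j) (sub_nonneg.2 (ciInf_le (Finite.bddBelow_range v) j)))
    (mem_univ r)
  linarith

theorem mulVec_apply_le_iSup_of_mem_rowStochastic (hM : M ∈ rowStochastic ℝ n) (v : n → ℝ)
    (i : n) : (M *ᵥ v) i ≤ ⨆ j, v j := by
  simpa using mulVec_apply_le_of_mem_rowStochastic hM v i i |>.trans <|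
    sub_le_self _ (mul_nonneg (hM.1 i i) (sub_nonneg.2 (le_ciSup (Finite.bddAbove_range v) i)))

theorem iInf_le_mulVec_apply_of_mem_rowStochastic (hM : M ∈ rowStochastic ℝ n) (v : n → ℝ)
    (i : n) : ⨅ j, v j ≤ (M *ᵥ v) i :=
  le_trans (le_add_of_nonneg_right
    (mul_nonneg (hM.1 i i) (sub_nonneg.2 (ciInf_le (Finite.bddBelow_range v) i))))
    (le_mulVec_apply_of_mem_rowStochastic hM v i i)

end Matrix

theorem exists_le_mul_exp_of_le_mul_add {u : ℕ → ℝ} {ρ K lam : ℝ} (hρ₀ : 0 ≤ ρ) (hρ₁ : ρ < 1)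
    (hK : 0 ≤ K) (hlam : 0 < lam) (h : ∀ k : ℕ, u (k + 1) ≤ ρ * u k + K * exp (-lam * k)) :
    ∃ C μ, 0 < μ ∧ μ ≤ lam ∧ ∀ k : ℕ, u k ≤ C * exp (-μ * k) := by
  set θ := (1 + ρ) / 2 with hθ
  have hθ₀ : 0 < θ := by positivity
  have hθ₁ : θ < 1 := by linarith
  set μ := min lam (-Real.log θ)
  have hμ : 0 < μ := lt_min hlam (neg_pos.2 (Real.log_neg hθ₀ hθ₁))
  have hθμ : θ ≤ exp (-μ) := by
    rw [← Real.exp_log hθ₀]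
    exact Real.exp_le_exp.2 (by linarith [min_le_right lam (-Real.log θ)])
  set C := max (u 0) (K / (exp (-μ) - ρ))
  have hKC : K ≤ C * (exp (-μ) - ρ) :=
    (div_le_iff₀ (by linarith [hθμ])).1 (le_max_right _ _)
  refine ⟨C, μ, hμ, min_le_left _ _, fun k => ?_⟩
  induction k with
  | zero =>
    rw [Nat.cast_zero, mul_zero, Real.exp_zero, mul_one]
    exact le_max_left _ _
  | succ k ih =>
    have hexp : exp (-lam * k) ≤ exp (-μ * k) :=
      Real.exp_le_exp.2 (by nlinarith [min_le_left lam (-Real.log θ), (k.cast_nonneg : (0:ℝ) ≤ k)])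
    have hsplit : exp (-μ * ↑(k + 1)) = exp (-μ) * exp (-μ * k) := by
      rw [← Real.exp_add]; push_cast; ring_nf
    calc u (k + 1) ≤ ρ * u k + K * exp (-lam * k) := h k
      _ ≤ ρ * (C * exp (-μ * k)) + K * exp (-μ * k) := by gcongr
      _ ≤ C * exp (-μ * ↑(k + 1)) := by
        rw [hsplit]; nlinarith [Real.exp_pos (-μ * k)]

theorem tendsto_mul_exp_neg_mul_atTop {μ : ℝ} (hμ : 0 < μ) (c : ℝ) :
    Tendsto (fun t : ℝ => c * exp (-μ * t)) atTop (𝓝 0) := by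
  simpa [neg_mul] using (Real.tendsto_exp_neg_atTop_nhds_zero.comp
    (tendsto_id.const_mul_atTop hμ)).const_mul c

theorem exists_forall_abs_sub_le_of_tendsto {n : Type*} [Nonempty n] {x : ℝ → n → ℝ}
    {D : ℕ → ℝ} (hD : Tendsto D atTop (𝓝 0))
    (h : ∀ (N : ℕ) s t i j, (N : ℝ) ≤ s → (N : ℝ) ≤ t → |x t i - x s j| ≤ D N) :
    ∃ L, ∀ (N : ℕ) t i, (N : ℝ) ≤ t → |x t i - L| ≤ D N := by
  obtain ⟨j₀⟩ := ‹Nonempty n›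
  have hcauchy : CauchySeq fun k : ℕ => x k j₀ :=
    cauchySeq_of_le_tendsto_0 D (fun k k' N hk hk' => by
      rw [Real.dist_eq]; exact h N k' k j₀ j₀ (by exact_mod_cast hk') (by exact_mod_cast hk)) hD
  obtain ⟨L, hL⟩ := cauchySeq_tendsto_of_complete hcauchy
  refine ⟨L, fun N t i ht => le_of_tendsto (tendsto_const_nhds.sub hL).abs ?_⟩
  filter_upwards [eventually_ge_atTop N] with k hk
  exact h N k t i j₀ (by exact_mod_cast hk) ht

theorem exists_uniform_exp_bound {ι : Type*} [Finite ι] [Nonempty ι] {f : ι → ℝ → ℝ}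
    (h : ∀ k, ∃ c μ, 0 < μ ∧ ∀ t, 0 ≤ t → f k t ≤ c * exp (-μ * t)) :
    ∃ c > 0, ∃ μ > 0, ∀ k t, 0 ≤ t → f k t ≤ c * exp (-μ * t) := by
  choose c μ hμ hf using h
  have := Fintype.ofFinite ι
  obtain ⟨k₀, hk₀⟩ := Finite.exists_min μ
  refine ⟨1 + ∑ k, |c k|, by positivity, μ k₀, hμ k₀, fun k t ht => ?_⟩
  calc f k t ≤ c k * exp (-μ k * t) := hf k t ht
    _ ≤ |c k| * exp (-μ k₀ * t) := by
        gcongr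
        · exact le_abs_self _
        · nlinarith [hk₀ k]
    _ ≤ (1 + ∑ k, |c k|) * exp (-μ k₀ * t) := by
        gcongr
        linarith [single_le_sum (f := fun k => |c k|) (fun k _ => abs_nonneg (c k)) (mem_univ k)]

section StochasticFlow

open Matrix

variable {n : Type*} [Fintype n] {P : ℝ → Matrix n n ℝ} {x : ℝ → n → ℝ} {K lam : ℝ}

noncomputable def spread (v : n → ℝ) : ℝ := (⨆ i, v i) - ⨅ i, v i

theorem abs_sub_mulVec_apply_le
    (hx : ∀ a b, 0 ≤ a → a ≤ b → ‖x b - P (b - a) *ᵥ x a‖ ≤ K * exp (-lam * a))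
    {a b : ℝ} (ha : 0 ≤ a) (hab : a ≤ b) (i : n) :
    |x b i - (P (b - a) *ᵥ x a) i| ≤ K * exp (-lam * a) :=
  (norm_le_pi_norm (x b - P (b - a) *ᵥ x a) i).trans (hx a b ha hab)

theorem mem_Icc_of_norm_sub_mulVec_le [DecidableEq n] (hP : ∀ t, 0 ≤ t → P t ∈ rowStochastic ℝ n)
    (hx : ∀ a b, 0 ≤ a → a ≤ b → ‖x b - P (b - a) *ᵥ x a‖ ≤ K * exp (-lam * a))
    {a b : ℝ} (ha : 0 ≤ a) (hab : a ≤ b) (i : n) :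
    x b i ∈ Set.Icc ((⨅ j, x a j) - K * exp (-lam * a)) ((⨆ j, x a j) + K * exp (-lam * a)) := by
  have hP' := hP (b - a) (sub_nonneg.2 hab)
  have := abs_le.1 (abs_sub_mulVec_apply_le hx ha hab i)
  constructor
  · linarith [iInf_le_mulVec_apply_of_mem_rowStochastic hP' (x a) i]
  · linarith [mulVec_apply_le_iSup_of_mem_rowStochastic hP' (x a) i]

theorem spread_add_one_le [DecidableEq n] [Nonempty n] (hP : ∀ t, 0 ≤ t → P t ∈ rowStochastic ℝ n)
    (hx : ∀ a b, 0 ≤ a → a ≤ b → ‖x b - P (b - a) *ᵥ x a‖ ≤ K * exp (-lam * a))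
    {r : n} {δ : ℝ} (hδ : ∀ i, δ ≤ P 1 i r) {a : ℝ} (ha : 0 ≤ a) :
    spread (x (a + 1)) ≤ (1 - δ) * spread (x a) + 2 * (K * exp (-lam * a)) := by
  have hstep : ∀ i, |x (a + 1) i - (P 1 *ᵥ x a) i| ≤ K * exp (-lam * a) := by
    simpa using abs_sub_mulVec_apply_le hx ha (le_add_of_nonneg_right zero_le_one)
  have hsup := sub_nonneg.2 (le_ciSup (Finite.bddAbove_range (x a)) r)
  have hinf := sub_nonneg.2 (ciInf_le (Finite.bddBelow_range (x a)) r)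
  have hup : (⨆ i, x (a + 1) i) ≤
      (⨆ j, x a j) - δ * ((⨆ j, x a j) - x a r) + K * exp (-lam * a) :=
    ciSup_le fun i => by
      nlinarith [(abs_le.1 (hstep i)).2, mulVec_apply_le_of_mem_rowStochastic (hP 1 zero_le_one)
        (x a) i r, hδ i]
  have hdown : (⨅ j, x a j) + δ * (x a r - ⨅ j, x a j) - K * exp (-lam * a) ≤
      ⨅ i, x (a + 1) i :=
    le_ciInf fun i => by
      nlinarith [(abs_le.1 (hstep i)).1, le_mulVec_apply_of_mem_rowStochastic (hP 1 zero_le_one)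
        (x a) i r, hδ i]
  unfold spread
  linarith

theorem exists_norm_sub_const_le_exp_of_rowStochastic [DecidableEq n] [Nonempty n]
    (hP : ∀ t, 0 ≤ t → P t ∈ rowStochastic ℝ n)
    (hx : ∀ a b, 0 ≤ a → a ≤ b → ‖x b - P (b - a) *ᵥ x a‖ ≤ K * exp (-lam * a))
    (hlam : 0 < lam) {r : n} (hr : ∀ i, 0 < P 1 i r) :
    ∃ L c μ, 0 < μ ∧ ∀ t, 0 ≤ t → ‖x t - fun _ => L‖ ≤ c * exp (-μ * t) := by
  obtain ⟨i₀, hi₀⟩ := Finite.exists_min fun i => P 1 i r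
  have hδ₁ : P 1 i₀ r ≤ 1 := le_one_of_mem_rowStochastic (hP 1 zero_le_one)
  have hK : 0 ≤ K := by simpa using (norm_nonneg _).trans (hx 0 0 le_rfl le_rfl)
  obtain ⟨C, μ, hμ, hμlam, hC⟩ := exists_le_mul_exp_of_le_mul_add (u := fun k => spread (x k))
    (sub_nonneg.2 hδ₁) (sub_lt_self 1 (hr i₀)) (by positivity : 0 ≤ 2 * K) hlam fun k => by
      simpa [mul_assoc] using spread_add_one_le hP hx hi₀ k.cast_nonneg
  -- every value taken after time `N` lies in the interval of length `spread (x N) + 2 K e^{-λN}`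
  have hD : ∀ (N : ℕ) s t i j, (N : ℝ) ≤ s → (N : ℝ) ≤ t →
      |x t i - x s j| ≤ (C + 2 * K) * exp (-μ * N) := by
    intro N s t i j hs ht
    have hti := mem_Icc_of_norm_sub_mulVec_le hP hx N.cast_nonneg ht i
    have hsj := mem_Icc_of_norm_sub_mulVec_le hP hx N.cast_nonneg hs j
    have hexp : exp (-lam * N) ≤ exp (-μ * N) :=
      Real.exp_le_exp.2 (by nlinarith [(N.cast_nonneg : (0 : ℝ) ≤ N)])
    have := hC N
    simp only [spread] at this
    rw [abs_le]
    constructor <;> nlinarith [hti.1, hti.2, hsj.1, hsj.2]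
  obtain ⟨L, hL⟩ := exists_forall_abs_sub_le_of_tendsto
    ((tendsto_mul_exp_neg_mul_atTop hμ (C + 2 * K)).comp tendsto_natCast_atTop_atTop) hD
  have hC₀ : 0 ≤ C + 2 * K := by
    simpa using (abs_nonneg _).trans (hD 0 0 0 i₀ i₀ (by simp) (by simp))
  refine ⟨L, (C + 2 * K) * exp μ, μ, hμ, fun t ht =>
    (pi_norm_le_iff_of_nonneg (by positivity)).2 fun i => ?_⟩
  rw [Pi.sub_apply, Real.norm_eq_abs]
  calc |x t i - L| ≤ (C + 2 * K) * exp (-μ * ⌊t⌋₊) := hL ⌊t⌋₊ t i (Nat.floor_le ht)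
    _ ≤ (C + 2 * K) * exp μ * exp (-μ * t) := by
      rw [mul_assoc, ← Real.exp_add]
      gcongr
      nlinarith [Nat.lt_floor_add_one t]

end StochasticFlow

section LinearFlow

open Matrix

variable {n : Type*} [Fintype n] [DecidableEq n] {S : Matrix n n ℝ} {x x' : ℝ → n → ℝ}

/-- Variation of constants: as the flow of `S` is nonexpansive, the forcing `x' - S x` moves `x`
away from the free solution by at most its integrated size `F b - F a`. -/
theorem norm_sub_exp_smul_mulVec_le
    (hS : ∀ t : ℝ, 0 ≤ t → ∀ v, ‖NormedSpace.exp (t • S) *ᵥ v‖ ≤ ‖v‖) {F F' : ℝ → ℝ} {a b : ℝ}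
    (hab : a ≤ b) (hx : ∀ t ∈ Set.Icc a b, HasDerivAt x (x' t) t)
    (hF : ∀ t, HasDerivAt F (F' t) t) (hg : ∀ t ∈ Set.Icc a b, ‖x' t - S *ᵥ x t‖ ≤ F' t) :
    ‖x b - NormedSpace.exp ((b - a) • S) *ᵥ x a‖ ≤ F b - F a := by
  set Φ : ℝ → Matrix n n ℝ := fun t => NormedSpace.exp ((b - t) • S)
  have hΦ : ∀ t, HasDerivAt Φ (-(Φ t * S)) t := fun t => by
    have h := (hasDerivAt_exp_smul_const (𝕂 := ℝ) S (b - t)).scomp t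
      ((hasDerivAt_id t).const_sub b)
    rw [neg_one_smul] at h
    exact h
  -- `t ↦ Φ t *ᵥ x t` only moves through the perturbation `x' - S x`
  have hf : ∀ t ∈ Set.Icc a b, HasDerivAt (fun s => Φ s *ᵥ x s - Φ a *ᵥ x a)
      (Φ t *ᵥ (x' t - S *ᵥ x t)) t := fun t ht =>
    ((hΦ t).matrix_mulVec (hx t ht)).sub_const _ |>.congr_deriv <| by
      rw [mulVec_sub, neg_mulVec, ← mulVec_mulVec, sub_eq_add_neg]
  have hbound := image_norm_le_of_norm_deriv_right_le_deriv_boundary (B := fun t => F t - F a)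
    (hf := fun t ht => (hf t ht).continuousAt.continuousWithinAt)
    (hf' := fun t ht => (hf t (Set.Ico_subset_Icc_self ht)).hasDerivWithinAt)
    (ha := by simp) (hB := fun t => (hF t).sub_const _)
    (bound := fun t ht =>
      (hS (b - t) (sub_nonneg.2 ht.2.le) _).trans (hg t (Set.Ico_subset_Icc_self ht)))
    (Set.right_mem_Icc.2 hab)
  simpa [Φ] using hbound

theorem norm_sub_exp_smul_mulVec_le_exp
    (hS : ∀ t : ℝ, 0 ≤ t → ∀ v, ‖NormedSpace.exp (t • S) *ᵥ v‖ ≤ ‖v‖) {K lam : ℝ} (hlam : 0 < lam)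
    (hx : ∀ t, 0 ≤ t → HasDerivAt x (x' t) t)
    (hg : ∀ t, 0 ≤ t → ‖x' t - S *ᵥ x t‖ ≤ K * exp (-lam * t)) {a b : ℝ} (ha : 0 ≤ a)
    (hab : a ≤ b) : ‖x b - NormedSpace.exp ((b - a) • S) *ᵥ x a‖ ≤ K / lam * exp (-lam * a) := by
  have hK : 0 ≤ K :=
    nonneg_of_mul_nonneg_left ((norm_nonneg _).trans (hg a ha)) (Real.exp_pos _)
  have hF : ∀ t, HasDerivAt (fun s => -(K / lam) * exp (-lam * s)) (K * exp (-lam * t)) t :=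
    fun t => (((hasDerivAt_id t).const_mul (-lam)).exp.const_mul (-(K / lam))).congr_deriv
      (by field_simp; simp)
  calc ‖x b - NormedSpace.exp ((b - a) • S) *ᵥ x a‖
      ≤ -(K / lam) * exp (-lam * b) - -(K / lam) * exp (-lam * a) :=
        norm_sub_exp_smul_mulVec_le hS hab (fun t ht => hx t (ha.trans ht.1)) hF
          fun t ht => hg t (ha.trans ht.1)
    _ ≤ K / lam * exp (-lam * a) := by
        have : 0 ≤ K / lam * exp (-lam * b) := by positivity
        linarith

end LinearFlow

section Laplacian

open Matrix

variable {n : Type*} [Fintype n] [DecidableEq n]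

/-- `w i j` weighs the edge `j → i`, so the diagonal holds the weighted in-degrees. -/
def weightedLaplacian {R : Type*} [Ring R] (w : Matrix n n R) : Matrix n n R :=
  diagonal (fun i => ∑ j, w i j) - w

theorem weightedLaplacian_mulVec_apply {R : Type*} [CommRing R] (w : Matrix n n R) (v : n → R)
    (i : n) : (weightedLaplacian w *ᵥ v) i = ∑ j, w i j * (v i - v j) := by
  rw [weightedLaplacian, sub_mulVec, Pi.sub_apply, mulVec_diagonal]
  simp [mulVec, dotProduct, mul_sub, sum_mul]

theorem weightedLaplacian_mulVec_one {R : Type*} [CommRing R] (w : Matrix n n R) :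
    weightedLaplacian w *ᵥ 1 = 0 :=
  funext fun i => by simp [weightedLaplacian_mulVec_apply]

variable {w : Matrix n n ℝ}

theorem exists_neg_weightedLaplacian_eq (hw : ∀ i j, 0 ≤ w i j) :
    ∃ (B : Matrix n n ℝ) (c : ℝ), (∀ i j, w i j ≤ B i j) ∧ -weightedLaplacian w = B - c • 1 := by
  set c := ∑ i, ∑ j, w i j
  refine ⟨w + diagonal fun i => c - ∑ j, w i j, c, fun i j => ?_, ?_⟩
  · have hrow : ∑ j, w i j ≤ c :=
      single_le_sum (f := fun i => ∑ j, w i j) (fun i _ => sum_nonneg fun j _ => hw i j)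
        (mem_univ i)
    by_cases hij : i = j
    · subst hij; simp [hrow]
    · simp [hij]
  · rw [weightedLaplacian, smul_one_eq_diagonal, add_sub_assoc, ← diagonal_sub]
    simp only [sub_sub_cancel_left, neg_sub]
    abel

theorem exp_smul_neg_weightedLaplacian_mem_rowStochastic (hw : ∀ i j, 0 ≤ w i j) {t : ℝ}
    (ht : 0 ≤ t) : NormedSpace.exp (t • -weightedLaplacian w) ∈ rowStochastic ℝ n := by
  obtain ⟨B, c, hwB, hB⟩ := exists_neg_weightedLaplacian_eq hw
  refine ⟨fun i j => ?_, exp_mulVec_of_mulVec_eq_zero ?_⟩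
  · rw [hB, smul_sub, smul_smul, sub_eq_add_neg, ← neg_smul, exp_add_smul_one]
    exact mul_nonneg (Real.exp_pos _).le
      (exp_apply_nonneg (fun i j => mul_nonneg ht ((hw i j).trans (hwB i j))) i j)
  · rw [smul_mulVec, neg_mulVec, weightedLaplacian_mulVec_one, neg_zero, smul_zero]

theorem exp_neg_weightedLaplacian_apply_pos (hw : ∀ i j, 0 ≤ w i j) {r i : n}
    (h : Relation.ReflTransGen (fun u v => 0 < w v u) r i) :
    0 < NormedSpace.exp (-weightedLaplacian w) i r := by
  obtain ⟨B, c, hwB, hB⟩ := exists_neg_weightedLaplacian_eq hw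
  have hB₀ : ∀ i j, 0 ≤ B i j := fun i j => (hw i j).trans (hwB i j)
  obtain ⟨k, hk⟩ := exists_pow_apply_pos hB₀
    (Relation.ReflTransGen.mono (fun u v (huv : 0 < w v u) => huv.trans_le (hwB v u)) _ _ h)
  rw [hB, sub_eq_add_neg, ← neg_smul, exp_add_smul_one]
  exact mul_pos (Real.exp_pos _)
    (lt_of_lt_of_le (by positivity) (pow_apply_div_factorial_le_exp_apply hB₀ k i r))

theorem exists_norm_sub_const_le_exp_of_hasDerivAt (hw : ∀ i j, 0 ≤ w i j) {r : n}
    (hr : ∀ i, Relation.ReflTransGen (fun u v => 0 < w v u) r i) {x x' : ℝ → n → ℝ}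
    {K lam : ℝ} (hlam : 0 < lam) (hx : ∀ t, 0 ≤ t → HasDerivAt x (x' t) t)
    (hg : ∀ t, 0 ≤ t → ‖x' t + weightedLaplacian w *ᵥ x t‖ ≤ K * exp (-lam * t)) :
    ∃ L c μ, 0 < μ ∧ ∀ t, 0 ≤ t → ‖x t - fun _ => L‖ ≤ c * exp (-μ * t) := by
  have : Nonempty n := ⟨r⟩
  have hP := fun t (ht : 0 ≤ t) => exp_smul_neg_weightedLaplacian_mem_rowStochastic hw ht
  refine exists_norm_sub_const_le_exp_of_rowStochastic hP
    (fun a b ha hab => norm_sub_exp_smul_mulVec_le_exp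
      (fun t ht => norm_mulVec_le_of_mem_rowStochastic (hP t ht)) hlam hx
      (fun t ht => by simpa [neg_mulVec] using hg t ht) ha hab) hlam (r := r) fun i => ?_
  simpa using exp_neg_weightedLaplacian_apply_pos hw (hr i)

end Laplacian

section Formation

open Matrix

variable {n m : Type*} [Fintype n] [Fintype m]

theorem abs_apply_le_mnorm (A : Matrix n m ℝ) (i : n) (j : m) : |A i j| ≤ mnorm A := by
  rw [mnorm, ← Real.sqrt_sq_eq_abs]
  refine Real.sqrt_le_sqrt ?_
  calc A i j ^ 2 ≤ ∑ j', A i j' ^ 2 :=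
        single_le_sum (f := fun j' => A i j' ^ 2) (fun _ _ => sq_nonneg _) (mem_univ j)
    _ ≤ ∑ i', ∑ j', A i' j' ^ 2 :=
        single_le_sum (f := fun i' => ∑ j', A i' j' ^ 2)
          (fun _ _ => sum_nonneg fun _ _ => sq_nonneg _) (mem_univ i)

theorem abs_mulVec_apply_le (A : Matrix n m ℝ) (v : m → ℝ) (i : n) :
    |(A *ᵥ v) i| ≤ mnorm A * ∑ j, |v j| :=
  calc |(A *ᵥ v) i| ≤ ∑ j, |A i j * v j| := abs_sum_le_sum_abs _ _
    _ ≤ ∑ j, mnorm A * |v j| := sum_le_sum fun j _ => by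
        rw [abs_mul]
        exact mul_le_mul_of_nonneg_right (abs_apply_le_mnorm A i j) (abs_nonneg _)
    _ = mnorm A * ∑ j, |v j| := (mul_sum _ _ _).symm

theorem enorm_le_sqrt_card_mul_norm (v : m → ℝ) :
    _root_.enorm v ≤ √(Fintype.card m) * ‖v‖ := by
  rw [_root_.enorm, ← Real.sqrt_sq (norm_nonneg v), ← Real.sqrt_mul (Nat.cast_nonneg _)]
  refine Real.sqrt_le_sqrt ?_
  calc ∑ i, v i ^ 2 ≤ ∑ _i : m, ‖v‖ ^ 2 := sum_le_sum fun i _ => by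
        rw [← sq_abs]
        exact pow_le_pow_left₀ (abs_nonneg _) (norm_le_pi_norm v i) 2
    _ = Fintype.card m * ‖v‖ ^ 2 := by simp

variable [DecidableEq n] {l : n → n → ℝ}

/-- In the coordinates `p i k - (A *ᵥ q i) k`, the formation control law is the Laplacian flow
of the weights `ku • l`, driven by the estimation errors `R i - A`. -/
theorem formation_input_apply_add_weightedLaplacian_mulVec (hl : ∀ i j, 0 ≤ l i j) (ku : ℝ)
    (p q : n → m → ℝ) (R : n → Matrix m m ℝ) (A : Matrix m m ℝ) (i : n) (k : m) :
    (ku • ∑ j ∈ univ.filter (fun j => 0 < l i j),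
        l i j • ((p j - p i) - (R i).mulVec (q j - q i))) k +
      (weightedLaplacian (ku • of l) *ᵥ fun j => p j k - (A *ᵥ q j) k) i =
      -(ku * ∑ j, l i j * ((R i - A) *ᵥ (q j - q i)) k) := by
  rw [sum_filter_of_ne fun j _ hj => (hl i j).lt_of_ne fun h => hj (by rw [← h, zero_smul]),
    weightedLaplacian_mulVec_apply]
  simp only [mulVec_sub, Pi.smul_apply, Finset.sum_apply, Pi.sub_apply, smul_eq_mul, mul_sum,
    Matrix.smul_apply, of_apply, ← sum_add_distrib, sub_mulVec, ← sum_neg_distrib]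
  exact sum_congr rfl fun j _ => by ring

theorem exists_norm_formation_error_sub_const_le (hl : ∀ i j, 0 ≤ l i j) {r : n}
    (hr : ∀ i, Relation.ReflTransGen (fun u v => 0 < l v u) r i) {ku : ℝ} (hku : 0 < ku)
    {q : n → m → ℝ} {R : n → ℝ → Matrix m m ℝ} {A : Matrix m m ℝ} {kw lw : ℝ} (hlw : 0 < lw)
    (hR : ∀ i t, 0 ≤ t → mnorm (R i t - A) ≤ kw * exp (-lw * t)) {p : n → ℝ → m → ℝ}
    (hp : ∀ i t, 0 ≤ t → HasDerivAt (p i) (ku • ∑ j ∈ univ.filter (fun j => 0 < l i j),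
      l i j • ((p j t - p i t) - (R i t).mulVec (q j - q i))) t) (k : m) :
    ∃ L c μ, 0 < μ ∧ ∀ t, 0 ≤ t →
      ‖(fun i => p i t k - (A *ᵥ q i) k) - fun _ => L‖ ≤ c * exp (-μ * t) := by
  set Q := ∑ i, ∑ j, l i j * ∑ k', |q j k' - q i k'|
  have hQ : ∀ i, ∑ j, l i j * ∑ k', |q j k' - q i k'| ≤ Q := fun i =>
    single_le_sum (f := fun i => ∑ j, l i j * ∑ k', |q j k' - q i k'|)
      (fun i _ => sum_nonneg fun j _ => mul_nonneg (hl i j) (sum_nonneg fun _ _ => abs_nonneg _))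
      (mem_univ i)
  refine exists_norm_sub_const_le_exp_of_hasDerivAt (w := ku • of l)
    (fun i j => mul_nonneg hku.le (hl i j)) (r := r)
    (fun i => Relation.ReflTransGen.mono (fun u v (h : 0 < l v u) => mul_pos hku h) _ _ (hr i))
    hlw (K := ku * Q * kw) (fun t ht => hasDerivAt_pi.2 fun i =>
      (hasDerivAt_pi.1 (hp i t ht) k).sub_const _) fun t ht => ?_
  have hkw : 0 ≤ kw * exp (-lw * t) := (Real.sqrt_nonneg _).trans (hR r t ht)
  have hQ₀ : 0 ≤ Q := (sum_nonneg fun j _ => mul_nonneg (hl r j)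
    (sum_nonneg fun _ _ => abs_nonneg _)).trans (hQ r)
  rw [mul_assoc, mul_assoc]
  refine (pi_norm_le_iff_of_nonneg (by positivity)).2 fun i => ?_
  rw [Pi.add_apply, formation_input_apply_add_weightedLaplacian_mulVec hl ku (fun j => p j t) q
    (fun j => R j t) A i k, norm_neg, norm_mul, Real.norm_of_nonneg hku.le]
  refine mul_le_mul_of_nonneg_left ?_ hku.le
  calc ‖∑ j, l i j * ((R i t - A) *ᵥ (q j - q i)) k‖
      ≤ ∑ j, l i j * (kw * exp (-lw * t) * ∑ k', |q j k' - q i k'|) :=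
        (norm_sum_le _ _).trans <| sum_le_sum fun j _ => by
          rw [norm_mul, Real.norm_of_nonneg (hl i j), Real.norm_eq_abs]
          exact mul_le_mul_of_nonneg_left ((abs_mulVec_apply_le _ _ k).trans
            (mul_le_mul_of_nonneg_right (hR i t ht) (sum_nonneg fun _ _ => abs_nonneg _))) (hl i j)
    _ = (∑ j, l i j * ∑ k', |q j k' - q i k'|) * (kw * exp (-lw * t)) := by
        rw [sum_mul]; exact sum_congr rfl fun j _ => by ring
    _ ≤ Q * (kw * exp (-lw * t)) := mul_le_mul_of_nonneg_right (hQ i) hkw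

end Formation

theorem formation_control_convergence_general
    (N : ℕ)
    (C : Fin N → Matrix (Fin 3) (Fin 3) ℝ)
    (l : Fin N → Fin N → ℝ) (hl : ∀ i j, 0 ≤ l i j)
    (hroot : hasRootedOutBranch l)
    (pstar : Fin N → Fin 3 → ℝ)
    (ku : ℝ) (hku : 0 < ku)
    (Chat : Fin N → ℝ → Matrix (Fin 3) (Fin 3) ℝ)
    (Cstar : Matrix (Fin 3) (Fin 3) ℝ)
    (kw lw : ℝ) (hlw : 0 < lw)
    (hest : ∀ i, ∀ t : ℝ, 0 ≤ t →
      mnorm ((C i)ᵀ * Chat i t - Cstar) ≤ kw * Real.exp (-lw * t))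
    (p : Fin N → ℝ → Fin 3 → ℝ)
    (hode : ∀ i, ∀ t : ℝ, 0 ≤ t →
      HasDerivAt (p i)
        (ku • ∑ j ∈ Finset.univ.filter (fun j => 0 < l i j),
          l i j • ((p j t - p i t) - ((C i)ᵀ * Chat i t).mulVec (pstar j - pstar i))) t) :
    (∃ pinf : Fin 3 → ℝ, ∃ c > (0 : ℝ), ∃ lam > (0 : ℝ),
        ∀ i, ∀ t : ℝ, 0 ≤ t →
          _root_.enorm (p i t - (Cstar.mulVec (pstar i) + pinf)) ≤ c * Real.exp (-lam * t)) ∧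
    (∀ i j, Tendsto (fun t => p j t - p i t) atTop
        (nhds (Cstar.mulVec (pstar j - pstar i)))) := by
  obtain ⟨r, hr⟩ := hroot
  choose L hL using exists_norm_formation_error_sub_const_le hl hr hku hlw hest hode
  obtain ⟨c, hc, μ, hμ, hbound⟩ := exists_uniform_exp_bound hL
  have herr : ∀ i t, 0 ≤ t → ‖p i t - (Cstar *ᵥ pstar i + L)‖ ≤ c * exp (-μ * t) :=
    fun i t ht => (pi_norm_le_iff_of_nonneg (by positivity)).2 fun k => by
      simpa [sub_sub] using (norm_le_pi_norm _ i).trans (hbound k t ht)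
  refine ⟨⟨L, √3 * c, by positivity, μ, hμ, fun i t ht => ?_⟩, fun i j => ?_⟩
  · calc _root_.enorm (p i t - (Cstar *ᵥ pstar i + L))
        ≤ √3 * ‖p i t - (Cstar *ᵥ pstar i + L)‖ := by
          simpa using enorm_le_sqrt_card_mul_norm (p i t - (Cstar *ᵥ pstar i + L))
      _ ≤ √3 * c * exp (-μ * t) := by
          rw [mul_assoc]
          exact mul_le_mul_of_nonneg_left (herr i t ht) (Real.sqrt_nonneg 3)
  · have he : ∀ i, Tendsto (fun t => p i t - (Cstar *ᵥ pstar i + L)) atTop (𝓝 0) := fun i =>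
      squeeze_zero_norm' (eventually_atTop.2 ⟨0, herr i⟩) (tendsto_mul_exp_neg_mul_atTop hμ c)
    convert ((he j).sub (he i)).const_add (Cstar *ᵥ (pstar j - pstar i)) using 2
    · rw [mulVec_sub]; abel
    · simp

/-- under the formation control law with exponentially convergent orientation
estimates, the positions converge globally exponentially to the desired formation up to the
common rotation `C*` and a common translation `p_∞`; in particular the relative positions
converge to the rotated desired relative positions. -/
theorem formation_control_convergence
    (N : ℕ)
    (C : Fin N → Matrix (Fin 3) (Fin 3) ℝ)
    (hC : ∀ i, (C i)ᵀ * C i = 1) (hCdet : ∀ i, (C i).det = 1)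
    (l : Fin N → Fin N → ℝ) (hl : ∀ i j, 0 ≤ l i j)
    (hroot : hasRootedOutBranch l)
    (pstar : Fin N → Fin 3 → ℝ)
    (ku : ℝ) (hku : 0 < ku)
    (Chat : Fin N → ℝ → Matrix (Fin 3) (Fin 3) ℝ)
    (Cstar : Matrix (Fin 3) (Fin 3) ℝ)
    (kw lw : ℝ) (hkw : 0 < kw) (hlw : 0 < lw)
    (hest : ∀ i, ∀ t : ℝ, 0 ≤ t →
      mnorm ((C i)ᵀ * Chat i t - Cstar) ≤ kw * Real.exp (-lw * t))
    (p : Fin N → ℝ → Fin 3 → ℝ)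
    (hode : ∀ i, ∀ t : ℝ, 0 ≤ t →
      HasDerivAt (p i)
        (ku • ∑ j ∈ Finset.univ.filter (fun j => 0 < l i j),
          l i j • ((p j t - p i t) - ((C i)ᵀ * Chat i t).mulVec (pstar j - pstar i))) t) :
    (∃ pinf : Fin 3 → ℝ, ∃ c > (0 : ℝ), ∃ lam > (0 : ℝ),
        ∀ i, ∀ t : ℝ, 0 ≤ t →
          _root_.enorm (p i t - (Cstar.mulVec (pstar i) + pinf)) ≤ c * Real.exp (-lam * t)) ∧
    (∀ i j, Tendsto (fun t => p j t - p i t) atTop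
        (nhds (Cstar.mulVec (pstar j - pstar i)))) :=
  formation_control_convergence_general N C l hl hroot pstar ku hku Chat Cstar kw lw hlw hest p hode
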